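/- arXiv:1302.1330 — 3 statements merged into one kernel-verified Lean document; each statement's English description precedes it below -/
import Mathlib

section
/- A real n×n matrix M generates a semigroup of stochastic matrices, i.e. exp(tM) is stochastic (nonnegative entries, columns summing to 1) for all t ≥ 0, if and only if M satisfies the Kolmogorov conditions: M_{ij} ≥ 0 for all i ≠ j, and every column of M sums to zero. -/
open Matrix

/-- A real square matrix is column-stochastic. -/
def IsColStochastic {n : ℕ} (T : Matrix (Fin n) (Fin n) ℝ) : Prop :=
  (∀ i j, 0 ≤ T i j) ∧ ∀ j, ∑ i, T i j = 1

/-- Kolmogorov conditions for a generator. -/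
def IsKolmogorov {n : ℕ} (M : Matrix (Fin n) (Fin n) ℝ) : Prop :=
  (∀ i j, i ≠ j → 0 ≤ M i j) ∧ ∀ j, ∑ i, M i j = 0

/-!
The right derivative of `t ↦ exp (t • M)` at `0` is `M`. If the semigroup is stochastic, the
off-diagonal entries start at `0` and stay nonnegative, and the column sums are constantly `1`;
differentiating gives the Kolmogorov conditions.

Conversely, if every column of `A` sums to `c`, every column of `A ^ k` sums to `c ^ k`, so by the
power series every column of `exp A` sums to `Real.exp c`. If the off-diagonal entries of `A` are
nonnegative, then `A + c • 1` is entrywise nonnegative for `c` large, hence so is its exponential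
series, and `exp A = Real.exp (-c) • exp (A + c • 1)`.
-/

open NormedSpace
open scoped Matrix.Norms.Operator Nat

theorem nonneg_of_hasDerivWithinAt_Ioi {f : ℝ → ℝ} {f' a : ℝ}
    (hf : HasDerivWithinAt f f' (Set.Ioi a) a) (hle : ∀ t > a, f a ≤ f t) : 0 ≤ f' := by
  refine ge_of_tendsto ((hasDerivWithinAt_iff_tendsto_slope' Set.self_notMem_Ioi).mp hf) ?_
  filter_upwards [self_mem_nhdsWithin] with t ht
  rw [slope_def_field]
  exact div_nonneg (sub_nonneg.mpr (hle t ht)) (sub_nonneg.mpr (le_of_lt ht))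

theorem eq_zero_of_hasDerivWithinAt_Ioi {f : ℝ → ℝ} {f' a : ℝ}
    (hf : HasDerivWithinAt f f' (Set.Ioi a) a) (hconst : ∀ t > a, f t = f a) : f' = 0 :=
  le_antisymm
    (neg_nonneg.mp (nonneg_of_hasDerivWithinAt_Ioi hf.neg fun t ht => neg_le_neg (hconst t ht).le))
    (nonneg_of_hasDerivWithinAt_Ioi hf fun t ht => (hconst t ht).ge)

namespace Matrix

variable {m : Type*} [Fintype m] [DecidableEq m]

theorem sum_pow_apply_of_sum_apply_eq {A : Matrix m m ℝ} {c : ℝ} (hA : ∀ j, ∑ i, A i j = c)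
    (k : ℕ) (j : m) : ∑ i, (A ^ k) i j = c ^ k := by
  induction k generalizing j with
  | zero => simp [one_apply]
  | succ k ih =>
    simp_rw [pow_succ, mul_apply]
    rw [Finset.sum_comm]
    simp_rw [← Finset.sum_mul, ih, ← Finset.mul_sum, hA]

theorem hasSum_exp_apply (A : Matrix m m ℝ) (i j : m) :
    HasSum (fun k => (k !⁻¹ : ℝ) * (A ^ k) i j) (exp A i j) :=
  Pi.hasSum.mp (Pi.hasSum.mp (exp_series_hasSum_exp' (𝕂 := ℝ) A) i) j

theorem exp_apply_nonneg {A : Matrix m m ℝ} (hA : ∀ i j, 0 ≤ A i j) (i j : m) :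
    0 ≤ exp A i j :=
  (hasSum_exp_apply A i j).nonneg fun k => mul_nonneg (by positivity) (pow_apply_nonneg hA k i j)

theorem sum_exp_apply_of_sum_apply_eq {A : Matrix m m ℝ} {c : ℝ} (hA : ∀ j, ∑ i, A i j = c)
    (j : m) : ∑ i, exp A i j = Real.exp c := by
  have hsum := hasSum_sum (s := Finset.univ) fun i _ => hasSum_exp_apply A i j
  simp_rw [← Finset.mul_sum, sum_pow_apply_of_sum_apply_eq hA] at hsum
  have hexp : HasSum (fun k => (k !⁻¹ : ℝ) * c ^ k) (Real.exp c) := by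
    rw [Real.exp_eq_exp_ℝ]
    exact exp_series_hasSum_exp' (𝕂 := ℝ) c
  exact hsum.unique hexp

theorem exp_smul_one (c : ℝ) : exp (c • (1 : Matrix m m ℝ)) = Real.exp c • 1 := by
  rw [← Algebra.algebraMap_eq_smul_one, ← Algebra.algebraMap_eq_smul_one, Real.exp_eq_exp_ℝ]
  exact (algebraMap_exp_comm c).symm

theorem exp_apply_nonneg_of_offDiag_nonneg {A : Matrix m m ℝ} (hA : ∀ i j, i ≠ j → 0 ≤ A i j)
    (i j : m) : 0 ≤ exp A i j := by
  set c := ∑ l, |A l l|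
  have hshift : ∀ i j, 0 ≤ (A + c • 1) i j := by
    intro i j
    rcases eq_or_ne i j with rfl | hij
    · have : |A i i| ≤ c := Finset.single_le_sum (fun l _ => abs_nonneg (A l l)) (Finset.mem_univ i)
      simp only [add_apply, smul_apply, one_apply_eq, smul_eq_mul, mul_one]
      linarith [neg_abs_le (A i i)]
    · simpa [one_apply_ne hij] using hA i j hij
  have hsplit : exp A = Real.exp (-c) • exp (A + c • 1) :=
    calc exp A = exp ((-c) • 1 + (A + c • 1)) := by
          rw [neg_smul, add_comm A, neg_add_cancel_left]
      _ = exp ((-c) • 1) * exp (A + c • 1) :=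
        Matrix.exp_add_of_commute _ _ ((Commute.one_left _).smul_left _)
      _ = Real.exp (-c) • exp (A + c • 1) := by rw [exp_smul_one, smul_one_mul]
  rw [hsplit, smul_apply, smul_eq_mul]
  exact mul_nonneg (Real.exp_nonneg _) (exp_apply_nonneg hshift i j)

theorem hasDerivAt_exp_smul_apply (A : Matrix m m ℝ) (i j : m) (t : ℝ) :
    HasDerivAt (fun u : ℝ => exp (u • A) i j) ((exp (t • A) * A) i j) t :=
  (entryLinearMap ℝ ℝ i j).toContinuousLinearMap.hasFDerivAt.comp_hasDerivAt t
    (hasDerivAt_exp_smul_const A t)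

end Matrix

theorem stochastic_semigroup_iff_kolmogorov {n : ℕ} (M : Matrix (Fin n) (Fin n) ℝ) :
    (∀ t : ℝ, 0 ≤ t → IsColStochastic (NormedSpace.exp (t • M))) ↔ IsKolmogorov M := by
  have hderiv (i j : Fin n) : HasDerivAt (fun t : ℝ => exp (t • M) i j) (M i j) 0 := by
    simpa using hasDerivAt_exp_smul_apply M i j 0
  constructor
  · intro hstoch
    constructor
    · intro i j hij
      refine nonneg_of_hasDerivWithinAt_Ioi (hderiv i j).hasDerivWithinAt fun t ht => ?_
      simpa [one_apply_ne hij] using (hstoch t ht.le).1 i j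
    · intro j
      have hsum_deriv := HasDerivAt.fun_sum (u := Finset.univ) fun i _ => hderiv i j
      refine eq_zero_of_hasDerivWithinAt_Ioi hsum_deriv.hasDerivWithinAt fun t ht => ?_
      simpa using ((hstoch t ht.le).2 j).trans ((hstoch 0 le_rfl).2 j).symm
  · rintro ⟨hoff, hsum⟩ t ht
    refine ⟨exp_apply_nonneg_of_offDiag_nonneg fun i j hij => ?_, fun j => ?_⟩
    · simpa using mul_nonneg ht (hoff i j hij)
    · have hsum_smul : ∀ j, ∑ i, (t • M) i j = 0 := by simp [← Finset.mul_sum, hsum]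
      simpa using sum_exp_apply_of_sum_apply_eq hsum_smul j
end

section
/- For the unitary qubit evolution dρ/dt = −i[H, ρ] with H = ω σ_x and ω ≠ 0, the induced 6×6 generator 𝕄 on the tomographic probability vector P (with μ = π_y/π_z) has the block form with nonzero off-diagonal blocks coupling the y- and z-components, given by 𝕄 P where dp₁^{(y)}/dt = −2ωμ p₁^{(z)} + 2ωμ p₂^{(z)}, dp₂^{(y)}/dt = 2ωμ p₁^{(z)} − 2ωμ p₂^{(z)}, dp₁^{(z)}/dt = ω μ^{-1}(p₁^{(y)} − p₂^{(y)}), dp₂^{(z)}/dt = −ω μ^{-1}(p₁^{(y)} − p₂^{(y)}), and the x-components constant. This 𝕄 has a strictly negative off-diagonal entry, hence does not satisfy the Kolmogorov conditions. -/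
open Matrix

/-- The 6×6 tomographic generator induced by the unitary evolution with `H = ω σx`,
with coordinates ordered as `(p₁ˣ, p₂ˣ, p₁ʸ, p₂ʸ, p₁ᶻ, p₂ᶻ)` and `μ = πy/πz`. -/
noncomputable def genUnitary (ω μ : ℝ) : Matrix (Fin 6) (Fin 6) ℝ :=
  !![0, 0, 0, 0, 0, 0;
     0, 0, 0, 0, 0, 0;
     0, 0, 0, 0, -2 * ω * μ, 2 * ω * μ;
     0, 0, 0, 0, 2 * ω * μ, -2 * ω * μ;
     0, 0, ω / μ, -(ω / μ), 0, 0;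
     0, 0, -(ω / μ), ω / μ, 0, 0]

/-! The entries `∓2ωμ` coupling `p₁ᶻ` into `p₁ʸ` and `p₂ʸ` have opposite signs, so one of them
is negative as soon as `ωμ ≠ 0`; a negative off-diagonal rate rules out the Kolmogorov
conditions. -/

theorem not_isKolmogorov_of_neg {n : ℕ} {M : Matrix (Fin n) (Fin n) ℝ} {i j : Fin n}
    (hij : i ≠ j) (hneg : M i j < 0) : ¬ IsKolmogorov M :=
  fun hM => (hM.1 i j hij).not_gt hneg

theorem genUnitary_two_four (ω μ : ℝ) : genUnitary ω μ 2 4 = -2 * ω * μ := rfl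

theorem genUnitary_three_four (ω μ : ℝ) : genUnitary ω μ 3 4 = 2 * ω * μ := rfl

theorem genUnitary_exists_neg_offDiag {ω μ : ℝ} (hωμ : ω * μ ≠ 0) :
    ∃ i j, i ≠ j ∧ genUnitary ω μ i j < 0 := by
  rcases hωμ.lt_or_gt with hneg | hpos
  · exact ⟨3, 4, by decide, by rw [genUnitary_three_four]; linarith⟩
  · exact ⟨2, 4, by decide, by rw [genUnitary_two_four]; linarith⟩

theorem unitary_generator_not_kolmogorov (ω πy πz : ℝ) (hω : ω ≠ 0)
    (hπy : 0 < πy) (hπz : 0 < πz) :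
    (∃ i j, i ≠ j ∧ genUnitary ω (πy / πz) i j < 0) ∧
    ¬ IsKolmogorov (genUnitary ω (πy / πz)) := by
  have hωμ : ω * (πy / πz) ≠ 0 := mul_ne_zero hω (div_pos hπy hπz).ne'
  obtain ⟨i, j, hij, hneg⟩ := genUnitary_exists_neg_offDiag hωμ
  exact ⟨⟨i, j, hij, hneg⟩, not_isKolmogorov_of_neg hij hneg⟩
end

section
/- For the random unitary evolution Λ(t)ρ = ∑_{μ=0}^3 p_μ(t) σ_μ ρ σ_μ with p₀(t) = (1 + A₁₂ + A₁₃ + A₂₃)/4, p₁(t) = (1 − A₁₂ − A₁₃ + A₂₃)/4, p₂(t) = (1 − A₁₂ + A₁₃ − A₂₃)/4, p₃(t) = (1 + A₁₂ − A₁₃ − A₂₃)/4, where A_{ij}(t) = exp(−2(γ_i+γ_j)t) and γ_k ≥ 0, the vector (p₀(t), p₁(t), p₂(t), p₃(t)) is a probability vector for all t ≥ 0. -/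
theorem random_unitary_probabilities (γ₁ γ₂ γ₃ : ℝ)
    (hγ₁ : 0 ≤ γ₁) (hγ₂ : 0 ≤ γ₂) (hγ₃ : 0 ≤ γ₃)
    (A₁₂ A₁₃ A₂₃ : ℝ → ℝ)
    (hA₁₂ : ∀ t, A₁₂ t = Real.exp (-2 * (γ₁ + γ₂) * t))
    (hA₁₃ : ∀ t, A₁₃ t = Real.exp (-2 * (γ₁ + γ₃) * t))
    (hA₂₃ : ∀ t, A₂₃ t = Real.exp (-2 * (γ₂ + γ₃) * t))
    (p : ℝ → Fin 4 → ℝ)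
    (hp : ∀ t, p t = ![(1 + A₁₂ t + A₁₃ t + A₂₃ t) / 4,
                       (1 - A₁₂ t - A₁₃ t + A₂₃ t) / 4,
                       (1 - A₁₂ t + A₁₃ t - A₂₃ t) / 4,
                       (1 + A₁₂ t - A₁₃ t - A₂₃ t) / 4]) :
    ∀ t : ℝ, 0 ≤ t → (∀ μ, 0 ≤ p t μ) ∧ ∑ μ, p t μ = 1 := by
  intro t ht
  have ha : A₁₂ t = Real.exp (-2 * (γ₁ + γ₂) * t) := hA₁₂ t
  have hb : A₁₃ t = Real.exp (-2 * (γ₁ + γ₃) * t) := hA₁₃ t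
  have hc : A₂₃ t = Real.exp (-2 * (γ₂ + γ₃) * t) := hA₂₃ t
  have ha0 : 0 < A₁₂ t := ha ▸ Real.exp_pos _
  have hb0 : 0 < A₁₃ t := hb ▸ Real.exp_pos _
  have hc0 : 0 < A₂₃ t := hc ▸ Real.exp_pos _
  have ha1 : A₁₂ t ≤ 1 := by rw [ha, Real.exp_le_one_iff]; nlinarith
  have hb1 : A₁₃ t ≤ 1 := by rw [hb, Real.exp_le_one_iff]; nlinarith
  have hc1 : A₂₃ t ≤ 1 := by rw [hc, Real.exp_le_one_iff]; nlinarith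
  have hab : A₁₂ t * A₁₃ t ≤ A₂₃ t := by
    rw [ha, hb, hc, ← Real.exp_add, Real.exp_le_exp]; nlinarith
  have hac : A₁₂ t * A₂₃ t ≤ A₁₃ t := by
    rw [ha, hb, hc, ← Real.exp_add, Real.exp_le_exp]; nlinarith
  have hbc : A₁₃ t * A₂₃ t ≤ A₁₂ t := by
    rw [ha, hb, hc, ← Real.exp_add, Real.exp_le_exp]; nlinarith
  rw [hp t]
  constructor
  · intro μ
    fin_cases μ <;> simp <;> nlinarith [mul_pos ha0 hb0, mul_pos ha0 hc0, mul_pos hb0 hc0]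
  · simp [Fin.sum_univ_four]; ring
end
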